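/- If G and H are distance critical simple graphs, then their strong product G ⊠ H is distance critical; more precisely, every vertex of G ⊠ H admits a determining pair. -/

import Mathlib

/-- A graph is *distance critical* if for every vertex `v` there is a pair of vertices of
`G − v` whose distance in `G − v` differs from their distance in `G`
(distances are `ℕ∞`-valued, `⊤` when there is no connecting path). -/
def IsDistanceCritical {V : Type*} (G : SimpleGraph V) : Prop :=
  ∀ v : V, ∃ x y : ({v}ᶜ : Set V),
    (G.induce ({v}ᶜ : Set V)).edist x y ≠ G.edist (x : V) (y : V)

/-- `{a, b}` is a *determining pair* for `v` : `a` and `b` are distinct, nonadjacent,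
and `v` is their unique common neighbor. -/
def IsDeterminingPair {V : Type*} (G : SimpleGraph V) (v a b : V) : Prop :=
  a ≠ b ∧ ¬ G.Adj a b ∧ G.Adj a v ∧ G.Adj b v ∧
    ∀ w : V, G.Adj a w → G.Adj b w → w = v

/-- The strong product of two simple graphs. -/
def strongProd {α β : Type*} (G : SimpleGraph α) (H : SimpleGraph β) :
    SimpleGraph (α × β) where
  Adj p q := p ≠ q ∧ (p.1 = q.1 ∨ G.Adj p.1 q.1) ∧ (p.2 = q.2 ∨ H.Adj p.2 q.2)
  symm := ⟨fun p q ⟨hne, h1, h2⟩ =>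
    ⟨hne.symm, h1.imp Eq.symm (fun h => h.symm), h2.imp Eq.symm (fun h => h.symm)⟩⟩
  loopless := ⟨fun p ⟨hne, _, _⟩ => hne rfl⟩

/-!
If deleting `v` changes the distance between `x` and `y`, every shortest `x`–`y` path passes
through `v`; the neighbours `a`, `b` of `v` on such a path form a determining pair, since a
second common neighbour would give an equally short detour around `v`. Conversely a
determining pair of `v` is at distance `2` in `G` and at distance greater than `2` in `G - v`.
So distance criticality means that every vertex has a determining pair, and determining pairs
`{a, b}` of `u` in `G` and `{c, d}` of `w` in `H` yield the determining pair
`{(a, c), (b, d)}` of `(u, w)` in `G ⊠ H`.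
-/

namespace SimpleGraph

variable {V : Type*} {G : SimpleGraph V}

theorem edist_le_edist_induce (s : Set V) (x y : s) :
    G.edist (x : V) y ≤ (G.induce s).edist x y := by
  rcases eq_or_ne ((G.induce s).edist x y) ⊤ with h | h
  · simp [h]
  · obtain ⟨q, hq⟩ := exists_walk_of_edist_ne_top h
    rw [← hq, ← q.length_map (Embedding.induce s).toHom]
    exact edist_le _

theorem edist_induce_le_length {s : Set V} {x y : s} (p : G.Walk x y)
    (hp : ∀ z ∈ p.support, z ∈ s) : (G.induce s).edist x y ≤ p.length := by
  have h := edist_le (p.induce s hp)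
  rwa [← Walk.length_map (Embedding.induce s).toHom, Walk.map_induce] at h

theorem Walk.IsPath.exists_eq_append_cons_cons {u v w : V} {p : G.Walk u w} (hp : p.IsPath)
    (hv : v ∈ p.support) (hu : u ≠ v) (hw : w ≠ v) :
    ∃ (a b : V) (r : G.Walk u a) (hav : G.Adj a v) (hvb : G.Adj v b) (s : G.Walk b w),
      p = r.append (.cons hav (.cons hvb s)) ∧ v ∉ r.support ∧ v ∉ s.support := by
  obtain ⟨q, t, rfl⟩ := p.mem_support_iff_exists_append.mp hv
  cases t with
  | nil => exact absurd rfl hw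
  | cons hvb s =>
    have hq : ¬q.Nil := Walk.not_nil_of_ne hu
    rw [← Walk.concat_dropLast (Walk.adj_penultimate hq), Walk.concat_append] at hp ⊢
    have hnodup := hp.support_nodup
    simp only [Walk.support_append, Walk.support_cons, List.tail_cons,
      List.nodup_append, List.nodup_cons, List.mem_cons] at hnodup
    exact ⟨_, _, _, _, hvb, s, rfl, fun h => hnodup.2.2 v h v (.inl rfl) rfl, hnodup.2.1.1⟩

theorem exists_isDeterminingPair_of_edist_induce_ne {v : V} {x y : ({v}ᶜ : Set V)}
    (h : (G.induce ({v}ᶜ : Set V)).edist x y ≠ G.edist (x : V) y) :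
    ∃ a b, IsDeterminingPair G v a b := by
  have hlt : G.edist (x : V) y < (G.induce ({v}ᶜ : Set V)).edist x y :=
    (edist_le_edist_induce _ x y).lt_of_ne h.symm
  have hreach : G.Reachable x y := reachable_of_edist_ne_top (ne_top_of_lt hlt)
  obtain ⟨p, hp, hplen⟩ := hreach.exists_path_of_dist
  have hshortest (q : G.Walk x y) : p.length ≤ q.length := hplen ▸ dist_le q
  -- A walk avoiding `v` and no longer than `p` would survive in `G - v`.
  have hthrough (q : G.Walk x y) (hq : q.length ≤ p.length) : v ∈ q.support := by
    by_contra hv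
    have hq' := edist_induce_le_length q fun z hz hzv => hv (hzv ▸ hz)
    have : (q.length : ℕ∞) ≤ G.edist (x : V) y := by
      rw [← hreach.coe_dist_eq_edist, ← hplen]
      exact_mod_cast hq
    exact (hq'.trans this).not_gt hlt
  obtain ⟨a, b, r, hav, hvb, s, rfl, hvr, hvs⟩ :=
    hp.exists_eq_append_cons_cons (hthrough p le_rfl) x.2 y.2
  simp only [Walk.length_append, Walk.length_cons] at hshortest hthrough
  refine ⟨a, b, ?_, fun hab => ?_, hav, hvb.symm, fun w haw hbw => ?_⟩
  · rintro rfl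
    have := hshortest (r.append s)
    simp only [Walk.length_append] at this
    omega
  · have := hshortest (r.append (.cons hab s))
    simp only [Walk.length_append, Walk.length_cons] at this
    omega
  · have := hthrough (r.append (.cons haw (.cons hbw.symm s)))
      (by simp only [Walk.length_append, Walk.length_cons]; omega)
    simp only [Walk.support_append, Walk.support_cons, List.tail_cons, List.mem_append,
      List.mem_cons] at this
    rcases this with hv | hv | hv
    exacts [absurd hv hvr, hv.symm, absurd hv hvs]

end SimpleGraph

namespace IsDeterminingPair

open SimpleGraph

variable {V : Type*} {G : SimpleGraph V} {v a b : V}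

theorem edist_induce_ne (h : IsDeterminingPair G v a b) :
    ∃ x y : ({v}ᶜ : Set V), (G.induce ({v}ᶜ : Set V)).edist x y ≠ G.edist (x : V) y := by
  obtain ⟨hab, hnadj, hav, hbv, huniq⟩ := h
  have hdist : G.edist a b = 2 := edist_eq_two_iff.mpr ⟨hab, hnadj, v, hav, hbv⟩
  have hdist' : 2 < (G.induce ({v}ᶜ : Set V)).edist ⟨a, hav.ne⟩ ⟨b, hbv.ne⟩ := by
    refine two_lt_edist_iff.mpr ⟨fun h => hab congr($h.1), hnadj, ?_⟩
    ext w
    simp only [mem_commonNeighbors, comap_adj, Function.Embedding.subtype_apply,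
      Set.mem_empty_iff_false, iff_false, not_and]
    exact fun haw hbw => w.2 (huniq w haw hbw)
  exact ⟨_, _, (hdist ▸ hdist').ne'⟩

theorem eq_of_eq_or_adj (h : IsDeterminingPair G v a b) {w : V}
    (ha : a = w ∨ G.Adj a w) (hb : b = w ∨ G.Adj b w) : w = v := by
  obtain ⟨hab, hnadj, -, -, huniq⟩ := h
  rcases ha with rfl | ha
  · rcases hb with hb | hb
    exacts [absurd hb.symm hab, absurd hb.symm hnadj]
  · rcases hb with rfl | hb
    exacts [absurd ha hnadj, huniq w ha hb]

theorem strongProd {W : Type*} {H : SimpleGraph W} {w c d : W}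
    (hG : IsDeterminingPair G v a b) (hH : IsDeterminingPair H w c d) :
    IsDeterminingPair (strongProd G H) (v, w) (a, c) (b, d) := by
  have ⟨hab, hnadj, hav, hbv, _⟩ := hG
  have ⟨_, _, hcw, hdw, _⟩ := hH
  refine ⟨fun h => hab congr($h.1), ?_, ?_, ?_, ?_⟩
  · rintro ⟨-, h | h, -⟩
    exacts [hab h, hnadj h]
  · exact ⟨fun h => hav.ne congr($h.1), .inr hav, .inr hcw⟩
  · exact ⟨fun h => hbv.ne congr($h.1), .inr hbv, .inr hdw⟩
  · rintro ⟨z₁, z₂⟩ ⟨-, ha₁, ha₂⟩ ⟨-, hb₁, hb₂⟩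
    exact Prod.ext (hG.eq_of_eq_or_adj ha₁ hb₁) (hH.eq_of_eq_or_adj ha₂ hb₂)

end IsDeterminingPair

theorem isDistanceCritical_iff_forall_exists_isDeterminingPair {V : Type*}
    {G : SimpleGraph V} : IsDistanceCritical G ↔ ∀ v, ∃ a b, IsDeterminingPair G v a b :=
  ⟨fun h v => have ⟨_, _, hxy⟩ := h v; SimpleGraph.exists_isDeterminingPair_of_edist_induce_ne hxy,
    fun h v => have ⟨_, _, hab⟩ := h v; hab.edist_induce_ne⟩

theorem stmt_12_general {α β : Type*}
    (G : SimpleGraph α) (H : SimpleGraph β)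
    (hG : IsDistanceCritical G) (hH : IsDistanceCritical H) :
    IsDistanceCritical (strongProd G H) ∧
      ∀ p : α × β, ∃ a b : α × β, IsDeterminingPair (strongProd G H) p a b := by
  rw [isDistanceCritical_iff_forall_exists_isDeterminingPair] at hG hH ⊢
  suffices hpair : ∀ p : α × β, ∃ a b, IsDeterminingPair (strongProd G H) p a b from
    ⟨hpair, hpair⟩
  rintro ⟨u, w⟩
  obtain ⟨a, b, hab⟩ := hG u
  obtain ⟨c, d, hcd⟩ := hH w
  exact ⟨_, _, hab.strongProd hcd⟩

theorem stmt_12 {α β : Type*} [Fintype α] [Fintype β]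
    (G : SimpleGraph α) (H : SimpleGraph β)
    (hG : IsDistanceCritical G) (hH : IsDistanceCritical H) :
    IsDistanceCritical (strongProd G H) ∧
      ∀ p : α × β, ∃ a b : α × β, IsDeterminingPair (strongProd G H) p a b :=
  stmt_12_general G H hG hH
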